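/- Let h₁,…,h_N be complex numbers and fix K with 1 ≤ K ≤ N. For a nonzero complex v, let T(v,K) be a set of K indices with the K largest values of Re(h_j · conj(v)). Then T(v,K) maximizes |∑_{j∈T} h_j| over all size-K subsets T whose sum has direction v, in the following precise sense: if T* is a size-K subset maximizing |∑_{j∈T} h_j| over all size-K subsets, and f* = ∑_{j∈T*} h_j ≠ 0, then every index in T* has Re(h_j · conj(f*)) ≥ Re(h_i · conj(f*)) for every i ∉ T*. -/

import Mathlib

/-!
Exchange argument: swapping `j ∈ T*` for `i ∉ T*` moves the sum from `f*` to `f* + (hᵢ - hⱼ)`,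
and by maximality this is no longer than `f*`. Since
`‖f + d‖² = ‖f‖² + 2⟪d, f⟫ + ‖d‖²`, that forces `⟪hᵢ - hⱼ, f*⟫ ≤ 0`, which for complex numbers
viewed as `ℝ²` is `Re(hᵢ conj f*) ≤ Re(hⱼ conj f*)`.
-/

open Finset Complex

open scoped RealInnerProductSpace

theorem real_inner_nonpos_of_norm_add_le {E : Type*} [NormedAddCommGroup E]
    [InnerProductSpace ℝ E] {f d : E} (h : ‖f + d‖ ≤ ‖f‖) : ⟪d, f⟫ ≤ 0 := by
  have hsq : ‖f + d‖ ^ 2 ≤ ‖f‖ ^ 2 := pow_le_pow_left₀ (norm_nonneg _) h 2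
  rw [norm_add_sq_real, real_inner_comm] at hsq
  nlinarith [sq_nonneg ‖d‖]

namespace Finset

variable {ι M : Type*} [DecidableEq ι]

theorem card_insert_erase_of_mem_of_notMem {T : Finset ι} {i j : ι} (hj : j ∈ T) (hi : i ∉ T) :
    (insert i (T.erase j)).card = T.card := by
  rw [card_insert_of_notMem (fun h ↦ hi (mem_of_mem_erase h)), card_erase_add_one hj]

theorem sum_insert_erase_of_mem_of_notMem [AddCommGroup M] (h : ι → M) {T : Finset ι} {i j : ι}
    (hj : j ∈ T) (hi : i ∉ T) :
    ∑ k ∈ insert i (T.erase j), h k = ∑ k ∈ T, h k + (h i - h j) := by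
  rw [sum_insert (fun h ↦ hi (mem_of_mem_erase h)), sum_erase_eq_sub hj]
  abel

end Finset

theorem real_inner_sum_le_of_forall_norm_sum_le {ι E : Type*} [DecidableEq ι] [NormedAddCommGroup E]
    [InnerProductSpace ℝ E] (h : ι → E) {T : Finset ι}
    (hmax : ∀ S : Finset ι, S.card = T.card → ‖∑ k ∈ S, h k‖ ≤ ‖∑ k ∈ T, h k‖)
    {i j : ι} (hj : j ∈ T) (hi : i ∉ T) :
    ⟪∑ k ∈ T, h k, h i⟫ ≤ ⟪∑ k ∈ T, h k, h j⟫ := by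
  have hswap := hmax _ (card_insert_erase_of_mem_of_notMem hj hi)
  rw [sum_insert_erase_of_mem_of_notMem h hj hi] at hswap
  have := real_inner_nonpos_of_norm_add_le hswap
  rw [inner_sub_left] at this
  rw [real_inner_comm (h i), real_inner_comm (h j)]
  linarith

theorem stmt_14_general {N : ℕ} (h : Fin N → ℂ) (K : ℕ)
    (Tstar : Finset (Fin N)) (hcard : Tstar.card = K)
    (hmax : ∀ T : Finset (Fin N), T.card = K →
      ‖∑ j ∈ T, h j‖ ≤ ‖∑ j ∈ Tstar, h j‖)
    (fstar : ℂ) (hf : fstar = ∑ j ∈ Tstar, h j) :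
    ∀ j ∈ Tstar, ∀ i ∉ Tstar,
      (h i * (starRingEnd ℂ) fstar).re ≤ (h j * (starRingEnd ℂ) fstar).re := by
  intro j hj i hi
  rw [← Complex.inner, ← Complex.inner, hf]
  exact real_inner_sum_le_of_forall_norm_sum_le h (hcard ▸ hmax) hj hi

theorem stmt_14 {N : ℕ} (h : Fin N → ℂ) (K : ℕ) (hK1 : 1 ≤ K) (hKN : K ≤ N)
    (Tstar : Finset (Fin N)) (hcard : Tstar.card = K)
    (hmax : ∀ T : Finset (Fin N), T.card = K →
      ‖∑ j ∈ T, h j‖ ≤ ‖∑ j ∈ Tstar, h j‖)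
    (fstar : ℂ) (hf : fstar = ∑ j ∈ Tstar, h j) (hf0 : fstar ≠ 0) :
    ∀ j ∈ Tstar, ∀ i ∉ Tstar,
      (h i * (starRingEnd ℂ) fstar).re ≤ (h j * (starRingEnd ℂ) fstar).re :=
  stmt_14_general h K Tstar hcard hmax fstar hf
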